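/- If a graph H is Sidorenko (i.e., t(H,W) ≥ t(K₂,W)^{e(H)} for every graphon W), then for every integer k ≥ 2 and all graphons W₁,…,W_k with W₁+⋯+W_k = 1 (the constant-1 graphon), one has t(H,W₁)+⋯+t(H,W_k) ≥ k^{-e(H)+1}. In other words, every Sidorenko graph is k-common for every k ≥ 2. -/

import Mathlib

/-! The edge densities `dᵢ = t(K₂, Wᵢ)` of a decomposition of the constant-one graphon
sum to `1`, so by the power mean inequality `∑ dᵢ ^ e ≥ k · k⁻ᵉ`; the Sidorenko property
bounds each `t(H, Wᵢ)` below by `dᵢ ^ e`. -/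

open MeasureTheory

noncomputable section

/-- The Lebesgue measure restricted to `[0,1]`. -/
abbrev muI : Measure ℝ := volume.restrict (Set.Icc 0 1)

/-- A graphon: a symmetric measurable function `[0,1]² → [0,1]`
(represented as a function on `ℝ²`). -/
def IsGraphon (W : ℝ → ℝ → ℝ) : Prop :=
  Measurable (Function.uncurry W) ∧ (∀ x y, W x y = W y x) ∧
    (∀ x y, W x y ∈ Set.Icc (0:ℝ) 1)

/-- The edges of a graph on `Fin m`, each listed once as an ordered pair. -/
def edgeFinset' {m : ℕ} (G : SimpleGraph (Fin m)) [DecidableRel G.Adj] :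
    Finset (Fin m × Fin m) :=
  Finset.univ.filter fun p => p.1 < p.2 ∧ G.Adj p.1 p.2

/-- The number of edges of `G`. -/
def edgeCount {m : ℕ} (G : SimpleGraph (Fin m)) [DecidableRel G.Adj] : ℕ :=
  (edgeFinset' G).card

/-- The homomorphism density `t(G, W)`. -/
def homDensity {m : ℕ} (G : SimpleGraph (Fin m)) [DecidableRel G.Adj]
    (W : ℝ → ℝ → ℝ) : ℝ :=
  ∫ x : Fin m → ℝ, ∏ p ∈ edgeFinset' G, W (x p.1) (x p.2)
    ∂(Measure.pi fun _ => muI)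

/-- The single-edge graph `K₂`. -/
abbrev K2 : SimpleGraph (Fin 2) := ⊤

/-- The complete bipartite graph `K_{a,b}` on `Fin (a+b)`. -/
def bip (a b : ℕ) : SimpleGraph (Fin (a + b)) where
  Adj i j := (decide (i.val < a)) ≠ (decide (j.val < a))
  symm := ⟨fun _ _ h => Ne.symm h⟩
  loopless := ⟨fun _ h => h rfl⟩

instance (a b : ℕ) : DecidableRel (bip a b).Adj :=
  fun i j => inferInstanceAs (Decidable (_ ≠ _))

/-- The cycle `C_n` on `Fin n` (for `n ≥ 3`). -/
def cyc (n : ℕ) : SimpleGraph (Fin n) where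
  Adj i j := i ≠ j ∧ ((i.val + 1) % n = j.val ∨ (j.val + 1) % n = i.val)
  symm := ⟨fun _ _ h => ⟨h.1.symm, h.2.symm⟩⟩
  loopless := ⟨fun _ h => h.1 rfl⟩

instance (n : ℕ) : DecidableRel (cyc n).Adj :=
  fun i j => inferInstanceAs (Decidable (_ ∧ _))

open Finset

instance : IsProbabilityMeasure muI := ⟨by simp⟩

theorem homDensity_K2_eq_integral (W : ℝ → ℝ → ℝ) :
    homDensity K2 W = ∫ x : Fin 2 → ℝ, W (x 0) (x 1) ∂Measure.pi fun _ => muI := by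
  have hedges : edgeFinset' K2 = {((0 : Fin 2), (1 : Fin 2))} := by decide
  simp [homDensity, hedges]

namespace IsGraphon

variable {W : ℝ → ℝ → ℝ}

theorem nonneg (hW : IsGraphon W) (x y : ℝ) : 0 ≤ W x y := (hW.2.2 x y).1

theorem homDensity_nonneg (hW : IsGraphon W) {m : ℕ} (G : SimpleGraph (Fin m))
    [DecidableRel G.Adj] : 0 ≤ homDensity G W :=
  integral_nonneg fun _ => prod_nonneg fun _ _ => hW.nonneg _ _

theorem integrable_edge (hW : IsGraphon W) :
    Integrable (fun x : Fin 2 → ℝ => W (x 0) (x 1)) (Measure.pi fun _ => muI) := by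
  have hmeas : Measurable fun x : Fin 2 → ℝ => Function.uncurry W (x 0, x 1) :=
    hW.1.comp ((measurable_pi_apply 0).prodMk (measurable_pi_apply 1))
  refine ⟨hmeas.aestronglyMeasurable, .of_bounded (C := 1) (.of_forall fun x => ?_)⟩
  rw [Real.norm_eq_abs, abs_of_nonneg (hW.nonneg _ _)]
  exact (hW.2.2 _ _).2

end IsGraphon

theorem sum_homDensity_K2_eq_one {ι : Type*} [Fintype ι] {W : ι → ℝ → ℝ → ℝ}
    (hW : ∀ i, IsGraphon (W i)) (hsum : ∀ x y, ∑ i, W i x y = 1) :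
    ∑ i, homDensity K2 (W i) = 1 := by
  simp_rw [homDensity_K2_eq_integral]
  rw [← integral_finsetSum _ fun i _ => (hW i).integrable_edge]
  simp [hsum]

theorem card_zpow_one_sub_le_sum_pow {ι : Type*} (s : Finset ι) {d : ι → ℝ}
    (hd : ∀ i ∈ s, 0 ≤ d i) (hsum : ∑ i ∈ s, d i = 1) (e : ℕ) :
    (#s : ℝ) ^ (1 - (e : ℤ)) ≤ ∑ i ∈ s, d i ^ e := by
  cases e with
  | zero => simp
  | succ n =>
    have hmean := pow_sum_div_card_le_sum_pow hd n
    rw [hsum, one_pow] at hmean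
    refine le_of_eq_of_le ?_ hmean
    rw [show 1 - ((n + 1 : ℕ) : ℤ) = -(n : ℤ) by push_cast; ring, zpow_neg, zpow_natCast,
      one_div]

theorem sidorenko_implies_kCommon_general {m : ℕ} (H : SimpleGraph (Fin m))
    [DecidableRel H.Adj]
    (hSid : ∀ W : ℝ → ℝ → ℝ, IsGraphon W →
      homDensity K2 W ^ edgeCount H ≤ homDensity H W)
    (k : ℕ) (W : Fin k → ℝ → ℝ → ℝ)
    (hW : ∀ i, IsGraphon (W i)) (hsum : ∀ x y, ∑ i, W i x y = 1) :
    (k : ℝ) ^ (1 - (edgeCount H : ℤ)) ≤ ∑ i, homDensity H (W i) :=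
  calc (k : ℝ) ^ (1 - (edgeCount H : ℤ))
      _ = (#(univ : Finset (Fin k)) : ℝ) ^ (1 - (edgeCount H : ℤ)) := by simp
      _ ≤ ∑ i, homDensity K2 (W i) ^ edgeCount H :=
        card_zpow_one_sub_le_sum_pow univ (fun i _ => (hW i).homDensity_nonneg K2)
          (sum_homDensity_K2_eq_one hW hsum) _
      _ ≤ ∑ i, homDensity H (W i) := sum_le_sum fun i _ => hSid _ (hW i)

/-- Every Sidorenko graph is k-common for every k ≥ 2. -/
theorem sidorenko_implies_kCommon {m : ℕ} (H : SimpleGraph (Fin m))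
    [DecidableRel H.Adj]
    (hSid : ∀ W : ℝ → ℝ → ℝ, IsGraphon W →
      homDensity K2 W ^ edgeCount H ≤ homDensity H W)
    (k : ℕ) (hk : 2 ≤ k) (W : Fin k → ℝ → ℝ → ℝ)
    (hW : ∀ i, IsGraphon (W i)) (hsum : ∀ x y, ∑ i, W i x y = 1) :
    (k : ℝ) ^ (1 - (edgeCount H : ℤ)) ≤ ∑ i, homDensity H (W i) :=
  sidorenko_implies_kCommon_general H hSid k W hW hsum

end
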